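/- arXiv:1504.01872 — 4 statements merged into one kernel-verified Lean document; each statement's English description precedes it below -/
import Mathlib

section
/- Let t ∈ [0,T], ω ∈ Ω, and let E be a metric space equipped with its Borel σ-algebra. If X : [0,T] × Ω → E is progressively measurable with respect to the canonical filtration (ℱ_u)_{u∈[0,T]} (i.e. for every u ∈ [0,T], (r,ω') ↦ X(r,ω') restricted to [0,u] × Ω is measurable for the product of the Borel σ-algebra on [0,u] and ℱ_u), then the shifted process X^{t,ω} : [0,T−t] × Ω → E defined by X^{t,ω}_r(ω') := X(t+r, ω ⊗_t ω') is progressively measurable with respect to (ℱ_u)_{u∈[0,T−t]}. -/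
open MeasureTheory

noncomputable section

/-- The path space `Ω`: continuous paths `ℝ → ℝ^d` starting from the origin
(only their restriction to `[0,T]` is relevant). -/
abbrev PathR (d : ℕ) := {ω : ℝ → EuclideanSpace ℝ (Fin d) // Continuous ω ∧ ω 0 = 0}

/-- The canonical filtration: `ℱ_u` is generated by the coordinate maps `ω ↦ ω_s`, `s ∈ [0,u]`. -/
def filtr (d : ℕ) (u : ℝ) : MeasurableSpace (PathR d) :=
  ⨆ s ∈ Set.Icc (0 : ℝ) u,
    MeasurableSpace.comap (fun ω : PathR d => ω.1 s) inferInstance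

/-- The concatenated path `ω ⊗_t ω'`: equals `ω` on `[0,t]` and `ω_t + ω'_{s−t}` for `s > t`. -/
def concat (d : ℕ) (t : ℝ) (ht : 0 ≤ t) (ω ω' : PathR d) : PathR d :=
  ⟨fun s => ω.1 (min s t) + ω'.1 (max (s - t) 0),
   ⟨(ω.2.1.comp (continuous_id.min continuous_const)).add
      (ω'.2.1.comp ((continuous_id.sub continuous_const).max continuous_const)),
    by
      have h1 : max ((0 : ℝ) - t) 0 = 0 := max_eq_right (by linarith)
      have h2 : min (0 : ℝ) t = 0 := min_eq_left ht
      simp only [h2, h1, ω.2.2, ω'.2.2, add_zero]⟩⟩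

/-
For `s ≤ t + u` the `s`-coordinate of `ω ⊗_t ω'` is a constant plus the coordinate `max (s - t) 0`
of `ω'`, a time in `[0,u]`; hence `ω' ↦ ω ⊗_t ω'` is `ℱ_u / ℱ_{t+u}`-measurable. Together with the
time shift `r ↦ t + r : [0,u] → [0,t+u]`, this writes `X^{t,ω}` on `[0,u] × Ω` as a measurable map
followed by `X` on `[0,t+u] × Ω`, which is measurable by progressive measurability.
-/

namespace PathR

variable {d : ℕ}

theorem measurable_eval_filtr {u r : ℝ} (hr : r ∈ Set.Icc 0 u) :
    Measurable[filtr d u] fun ω' : PathR d => ω'.1 r := by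
  rw [measurable_iff_comap_le]
  exact le_iSup₂ (f := fun s _ => MeasurableSpace.comap (fun ω : PathR d => ω.1 s) inferInstance)
    r hr

theorem measurable_concat {t u : ℝ} (ht : 0 ≤ t) (hu : 0 ≤ u) (ω : PathR d) :
    Measurable[filtr d u, filtr d (t + u)] (concat d t ht ω) := by
  rw [measurable_iff_comap_le, filtr, MeasurableSpace.comap_iSup]
  refine iSup_le fun s => ?_
  rw [MeasurableSpace.comap_iSup]
  refine iSup_le fun hs => ?_
  rw [MeasurableSpace.comap_comp, ← measurable_iff_comap_le]
  have hs' : max (s - t) 0 ∈ Set.Icc 0 u :=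
    ⟨le_max_right _ _, max_le (by linarith [hs.2]) hu⟩
  exact measurable_const.add (measurable_eval_filtr hs')

def shift (t u : ℝ) (ht : 0 ≤ t) (ω : PathR d) :
    Set.Icc (0 : ℝ) u × PathR d → Set.Icc (0 : ℝ) (t + u) × PathR d :=
  fun p => (⟨t + p.1, by linarith [p.1.2.1], by linarith [p.1.2.2]⟩, concat d t ht ω p.2)

theorem measurable_shift {t u : ℝ} (ht : 0 ≤ t) (hu : 0 ≤ u) (ω : PathR d) :
    Measurable[MeasurableSpace.prod inferInstance (filtr d u),
      MeasurableSpace.prod inferInstance (filtr d (t + u))] (shift t u ht ω) :=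
  letI := filtr d u
  (measurable_const.add (measurable_subtype_coe.comp measurable_fst)).subtype_mk.prodMk
    ((measurable_concat ht hu ω).comp measurable_snd)

end PathR

theorem stmt_2_general (T : ℝ) (d : ℕ)
    (t : ℝ) (ht : 0 ≤ t) (ω : PathR d)
    {E : Type*} [MeasurableSpace E]
    (X : ℝ → PathR d → E)
    (hX : ∀ u, 0 ≤ u → u ≤ T →
      @Measurable (Set.Icc (0 : ℝ) u × PathR d) E
        (MeasurableSpace.prod inferInstance (filtr d u)) _
        fun p => X p.1 p.2) :
    ∀ u, 0 ≤ u → u ≤ T - t →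
      @Measurable (Set.Icc (0 : ℝ) u × PathR d) E
        (MeasurableSpace.prod inferInstance (filtr d u)) _
        fun p => X (t + p.1) (concat d t ht ω p.2) := fun u hu huT =>
  (hX (t + u) (by linarith) (by linarith)).comp (PathR.measurable_shift ht hu ω)

/-- if `X : [0,T] × Ω → E` (E a metric space with its Borel σ-algebra)
is progressively measurable for the canonical filtration, then for `0 ≤ t ≤ T` and
`ω ∈ Ω` the shifted process `X^{t,ω} : (r,ω') ↦ X(t+r, ω ⊗_t ω')` is progressively
measurable on `[0, T−t]`. -/
theorem stmt_2 (T : ℝ) (hT : 0 < T) (d : ℕ) (hd : 1 ≤ d)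
    (t : ℝ) (ht : 0 ≤ t) (htT : t ≤ T) (ω : PathR d)
    {E : Type*} [MetricSpace E] [MeasurableSpace E] [BorelSpace E]
    (X : ℝ → PathR d → E)
    (hX : ∀ u, 0 ≤ u → u ≤ T →
      @Measurable (Set.Icc (0 : ℝ) u × PathR d) E
        (MeasurableSpace.prod inferInstance (filtr d u)) _
        fun p => X p.1 p.2) :
    ∀ u, 0 ≤ u → u ≤ T - t →
      @Measurable (Set.Icc (0 : ℝ) u × PathR d) E
        (MeasurableSpace.prod inferInstance (filtr d u)) _
        fun p => X (t + p.1) (concat d t ht ω p.2) :=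
  stmt_2_general T d t ht ω X hX
end
end

section
/- Let (Ω̃, 𝒢, P) be a probability space, 𝒢₀ ⊆ 𝒢₁ ⊆ … ⊆ 𝒢_n ⊆ 𝒢 a discrete filtration, and X₀, X₁, …, X_n a real-valued, square-integrable process adapted to (𝒢_i) with X₀ = 0. Suppose there is a constant K ≥ 0 such that for every 0 ≤ i < n, almost surely |E[X_{i+1} − X_i | 𝒢_i]| ≤ K and E[ (X_{i+1} − X_i − E[X_{i+1} − X_i | 𝒢_i])² | 𝒢_i ] ≤ K. Then E[ max_{0≤k≤n} |X_k| ] ≤ nK + 2√(nK). -/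
/-!
Write `X = M + A`, where `A k = ∑_{i<k} E[X_{i+1} - X_i | 𝒢_i]` is the predictable part and `M`
the martingale part of Doob's decomposition. The drift bound gives `|A k| ≤ nK`. The increments
of `M` are the centred increments of `X`; being orthogonal, they give `E[M_n²] ≤ nK` through the
conditional variance bound. Doob's maximal inequality for the submartingale `M²` bounds the tail
`P(max_k |M_k| > t)` by `E[M_n²] / t²`; integrating the tail, bounded by `1` below `c`, gives
`E[max_k |M_k|] ≤ c + E[M_n²] / c`, which is `2 √(E[M_n²])` for the best `c`.
-/

open MeasureTheory Filter Finset
open scoped NNReal ENNReal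

lemma le_two_mul_sqrt_of_forall_le_add_div {x V : ℝ} (hV : 0 ≤ V)
    (h : ∀ c, 0 < c → x ≤ c + V / c) : x ≤ 2 * √V := by
  rcases hV.eq_or_lt with rfl | hV
  · simpa using le_of_forall_pos_le_add fun c hc => by simpa using h c hc
  · simpa [Real.div_sqrt, two_mul] using h _ (Real.sqrt_pos.2 hV)

namespace MeasureTheory

variable {Ω : Type*} {m0 : MeasurableSpace Ω} {μ : Measure Ω}

lemma integrable_finset_sup' {ι : Type*} (s : Finset ι) (hs : s.Nonempty) {f : ι → Ω → ℝ}
    (hf : ∀ i ∈ s, Integrable (f i) μ) :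
    Integrable (fun ω => s.sup' hs fun i => f i ω) μ := by
  induction hs using Finset.Nonempty.cons_induction with
  | singleton a => simpa using hf a (mem_singleton_self a)
  | cons a s ha hs ih =>
    simp only [sup'_cons hs]
    exact (hf a (mem_cons_self a s)).sup (ih fun i hi => hf i (mem_cons_of_mem hi))

lemma integral_le_add_div_of_measureReal_lt_le [IsProbabilityMeasure μ] {f : Ω → ℝ}
    (hf : Integrable f μ) (hf0 : 0 ≤ᵐ[μ] f) {V c : ℝ} (hc : 0 < c)
    (htail : ∀ t, c < t → μ.real {ω | t < f ω} ≤ V / t ^ 2) :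
    ∫ ω, f ω ∂μ ≤ c + V / c := by
  set g : ℝ → ℝ := fun t => μ.real {ω | t < f ω}
  have hg_meas : Measurable g := Antitone.measurable fun a b hab =>
    measureReal_mono fun ω h => hab.trans_lt h
  have hg_Ioc : IntegrableOn g (Set.Ioc 0 c) :=
    Measure.integrableOn_of_bounded measure_Ioc_lt_top.ne hg_meas.aestronglyMeasurable
      (ae_of_all _ fun t => by
        rw [Real.norm_of_nonneg measureReal_nonneg]; exact measureReal_le_one)
  have hdom : IntegrableOn (fun t : ℝ => V * t ^ (-2 : ℝ)) (Set.Ioi c) :=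
    (integrableOn_Ioi_rpow_of_lt (by norm_num) hc).const_mul V
  have hg_le : ∀ t ∈ Set.Ioi c, g t ≤ V * t ^ (-2 : ℝ) := fun t ht => by
    rw [Real.rpow_neg (hc.trans ht).le, Real.rpow_two, ← div_eq_mul_inv]
    exact htail t ht
  have hg_Ioi : IntegrableOn g (Set.Ioi c) :=
    hdom.mono' hg_meas.aestronglyMeasurable <| (ae_restrict_iff' measurableSet_Ioi).2 <|
      ae_of_all _ fun t ht => by rw [Real.norm_of_nonneg measureReal_nonneg]; exact hg_le t ht
  calc ∫ ω, f ω ∂μ = ∫ t in Set.Ioi 0, g t := hf.integral_eq_integral_meas_lt hf0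
    _ = (∫ t in Set.Ioc 0 c, g t) + ∫ t in Set.Ioi c, g t := by
      rw [← setIntegral_union (Set.Ioc_disjoint_Ioi le_rfl) measurableSet_Ioi hg_Ioc hg_Ioi,
        Set.Ioc_union_Ioi_eq_Ioi hc.le]
    _ ≤ (∫ _ in Set.Ioc 0 c, (1 : ℝ)) + ∫ t in Set.Ioi c, V * t ^ (-2 : ℝ) :=
      add_le_add (setIntegral_mono_on hg_Ioc (integrableOn_const measure_Ioc_lt_top.ne)
          measurableSet_Ioc fun t _ => measureReal_le_one)
        (setIntegral_mono_on hg_Ioi hdom measurableSet_Ioi hg_le)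
    _ = c + V / c := by
      rw [integral_const_mul, integral_Ioi_rpow_of_lt (by norm_num) hc]
      norm_num [hc.le, Real.rpow_neg_one, div_eq_mul_inv]

namespace Martingale

variable [IsFiniteMeasure μ] {ℱ : Filtration ℕ m0} {M : ℕ → Ω → ℝ}

lemma condExp_mul_sub_ae_eq_zero (hM : Martingale M ℱ μ) (hL2 : ∀ k, MemLp (M k) 2 μ)
    (i : ℕ) : μ[M i * (M (i + 1) - M i) | ℱ i] =ᵐ[μ] 0 := by
  have hΔ : μ[M (i + 1) - M i | ℱ i] =ᵐ[μ] 0 := by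
    filter_upwards [condExp_sub (hM.integrable (i + 1)) (hM.integrable i) (ℱ i),
      hM.condExp_ae_eq (Nat.le_succ i)] with ω h hsucc
    rw [h, Pi.sub_apply, hsucc, condExp_of_stronglyMeasurable (ℱ.le i)
      (hM.stronglyAdapted i) (hM.integrable i), sub_self, Pi.zero_apply]
  filter_upwards [condExp_mul_of_stronglyMeasurable_left (hM.stronglyAdapted i)
    ((hL2 i).integrable_mul ((hL2 (i + 1)).sub (hL2 i)))
    ((hM.integrable (i + 1)).sub (hM.integrable i)), hΔ] with ω h hΔω
  rw [h, Pi.mul_apply, hΔω, Pi.zero_apply, mul_zero]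

lemma integral_sq_succ (hM : Martingale M ℱ μ) (hL2 : ∀ k, MemLp (M k) 2 μ) (i : ℕ) :
    ∫ ω, M (i + 1) ω ^ 2 ∂μ = ∫ ω, M i ω ^ 2 ∂μ + ∫ ω, (M (i + 1) ω - M i ω) ^ 2 ∂μ := by
  have hcross : ∫ ω, M i ω * (M (i + 1) ω - M i ω) ∂μ = 0 := by
    rw [← integral_condExp (ℱ.le i)]
    exact (integral_congr_ae (hM.condExp_mul_sub_ae_eq_zero hL2 i)).trans (integral_zero _ _)
  have hcross_int : Integrable (fun ω => M i ω * (M (i + 1) ω - M i ω)) μ :=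
    (hL2 i).integrable_mul ((hL2 (i + 1)).sub (hL2 i))
  have hΔ_int : Integrable (fun ω => (M (i + 1) ω - M i ω) ^ 2) μ :=
    ((hL2 (i + 1)).sub (hL2 i)).integrable_sq
  have hrest_int : Integrable
      (fun ω => 2 * (M i ω * (M (i + 1) ω - M i ω)) + (M (i + 1) ω - M i ω) ^ 2) μ :=
    (hcross_int.const_mul 2).add hΔ_int
  calc ∫ ω, M (i + 1) ω ^ 2 ∂μ
      = ∫ ω, M i ω ^ 2 + (2 * (M i ω * (M (i + 1) ω - M i ω)) + (M (i + 1) ω - M i ω) ^ 2) ∂μ :=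
        integral_congr_ae (ae_of_all _ fun ω => by ring)
    _ = ∫ ω, M i ω ^ 2 ∂μ + ∫ ω, (M (i + 1) ω - M i ω) ^ 2 ∂μ := by
      rw [integral_add (hL2 i).integrable_sq hrest_int,
        integral_add (hcross_int.const_mul 2) hΔ_int, integral_const_mul, hcross, mul_zero,
        zero_add]

lemma integral_sq_le (hM : Martingale M ℱ μ) (hL2 : ∀ k, MemLp (M k) 2 μ) (hM0 : M 0 = 0)
    {n : ℕ} {K : ℝ} (hinc : ∀ i < n, ∫ ω, (M (i + 1) ω - M i ω) ^ 2 ∂μ ≤ K) :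
    ∫ ω, M n ω ^ 2 ∂μ ≤ n * K := by
  induction n with
  | zero => simp [hM0]
  | succ n ih =>
    rw [hM.integral_sq_succ hL2, Nat.cast_succ, add_mul, one_mul]
    exact add_le_add (ih fun i hi => hinc i (hi.trans n.lt_succ_self)) (hinc n n.lt_succ_self)

lemma submartingale_sq (hM : Martingale M ℱ μ) (hL2 : ∀ k, MemLp (M k) 2 μ) :
    Submartingale (fun k ω => M k ω ^ 2) ℱ μ := by
  refine submartingale_nat (fun k => (hM.stronglyAdapted k).pow 2)
    (fun k => (hL2 k).integrable_sq) fun i => ?_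
  have hcross_int : Integrable (fun ω => M i ω * (M (i + 1) ω - M i ω)) μ :=
    (hL2 i).integrable_mul ((hL2 (i + 1)).sub (hL2 i))
  have hsq : μ[fun ω => M i ω ^ 2 | ℱ i] = fun ω => M i ω ^ 2 :=
    condExp_of_stronglyMeasurable (ℱ.le i) ((hM.stronglyAdapted i).pow 2) (hL2 i).integrable_sq
  have hadd : μ[fun ω => M i ω ^ 2 + 2 * (M i ω * (M (i + 1) ω - M i ω)) | ℱ i] =ᵐ[μ]
      μ[fun ω => M i ω ^ 2 | ℱ i] + μ[fun ω => 2 * (M i ω * (M (i + 1) ω - M i ω)) | ℱ i] :=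
    condExp_add (hL2 i).integrable_sq (hcross_int.const_mul 2) (ℱ i)
  have hsmul : μ[fun ω => 2 * (M i ω * (M (i + 1) ω - M i ω)) | ℱ i] =ᵐ[μ]
      (2 : ℝ) • μ[fun ω => M i ω * (M (i + 1) ω - M i ω) | ℱ i] :=
    condExp_smul (2 : ℝ) _ (ℱ i)
  have hcross : μ[fun ω => M i ω * (M (i + 1) ω - M i ω) | ℱ i] =ᵐ[μ] 0 :=
    hM.condExp_mul_sub_ae_eq_zero hL2 i
  -- dropping `(M (i + 1) - M i) ^ 2 ≥ 0` from `M (i + 1) ^ 2` leaves a function whose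
  -- conditional expectation is `M i ^ 2`
  have hmono := condExp_mono (m := ℱ i) ((hL2 i).integrable_sq.add (hcross_int.const_mul 2))
    (hL2 (i + 1)).integrable_sq
    (ae_of_all _ fun ω => by
      simp only [Pi.add_apply]; nlinarith [sq_nonneg (M (i + 1) ω - M i ω)])
  filter_upwards [hmono, hadd, hsmul, hcross] with ω hle hadd hsmul hcross
  calc M i ω ^ 2
      = μ[fun ω => M i ω ^ 2 + 2 * (M i ω * (M (i + 1) ω - M i ω)) | ℱ i] ω := by
        rw [hadd, Pi.add_apply, hsmul, Pi.smul_apply, hcross, hsq]; simp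
    _ ≤ μ[fun ω => M (i + 1) ω ^ 2 | ℱ i] ω := hle

lemma measureReal_lt_sup'_abs_le (hM : Martingale M ℱ μ) (hL2 : ∀ k, MemLp (M k) 2 μ)
    (n : ℕ) {t : ℝ} (ht : 0 < t) :
    μ.real {ω | t < (range (n + 1)).sup' nonempty_range_add_one fun k => |M k ω|}
      ≤ (∫ ω, M n ω ^ 2 ∂μ) / t ^ 2 := by
  set ε : ℝ≥0 := ⟨t ^ 2, sq_nonneg t⟩
  set B := {ω | (ε : ℝ) ≤ (range (n + 1)).sup' nonempty_range_add_one fun k => M k ω ^ 2}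
  have hsub : {ω | t < (range (n + 1)).sup' nonempty_range_add_one fun k => |M k ω|} ⊆ B := by
    intro ω (hω : t < _)
    obtain ⟨k, hk, htk⟩ := (lt_sup'_iff _).1 hω
    refine le_sup'_of_le (fun k => M k ω ^ 2) hk ?_
    exact sq_abs (M k ω) ▸ pow_le_pow_left₀ ht.le htk.le 2
  have hdoob : ε * μ.real B ≤ ∫ ω in B, M n ω ^ 2 ∂μ := by
    have := ENNReal.toReal_mono ENNReal.ofReal_ne_top
      (maximal_ineq (hM.submartingale_sq hL2) (fun k ω => sq_nonneg (M k ω)) (ε := ε) n)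
    rwa [ENNReal.toReal_mul, ENNReal.toReal_ofReal
      (setIntegral_nonneg_of_ae (ae_of_all _ fun ω => sq_nonneg _))] at this
  rw [le_div_iff₀ (by positivity), mul_comm]
  calc t ^ 2 * μ.real {ω | t < (range (n + 1)).sup' nonempty_range_add_one fun k => |M k ω|}
      ≤ ε * μ.real B := mul_le_mul_of_nonneg_left (measureReal_mono hsub) (sq_nonneg t)
    _ ≤ ∫ ω, M n ω ^ 2 ∂μ := hdoob.trans <|
      setIntegral_le_integral (hL2 n).integrable_sq (ae_of_all _ fun ω => sq_nonneg _)

end Martingale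

section Probability

variable [IsProbabilityMeasure μ] {ℱ : Filtration ℕ m0} {M : ℕ → Ω → ℝ}

lemma Martingale.integral_sup'_abs_le (hM : Martingale M ℱ μ) (hL2 : ∀ k, MemLp (M k) 2 μ)
    (n : ℕ) :
    ∫ ω, (range (n + 1)).sup' nonempty_range_add_one (fun k => |M k ω|) ∂μ
      ≤ 2 * √(∫ ω, M n ω ^ 2 ∂μ) := by
  refine le_two_mul_sqrt_of_forall_le_add_div (integral_nonneg fun ω => sq_nonneg _)
    fun c hc => integral_le_add_div_of_measureReal_lt_le ?_ ?_ hc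
      fun t ht => hM.measureReal_lt_sup'_abs_le hL2 n (hc.trans ht)
  · exact integrable_finset_sup' _ _ fun k _ => (hM.integrable k).abs
  · exact ae_of_all _ fun ω => le_sup'_of_le _ (mem_range.2 n.succ_pos) (abs_nonneg _)

end Probability

section Decomposition

variable {ℱ : Filtration ℕ m0} {f : ℕ → Ω → ℝ}

lemma ae_abs_predictablePart_le {n : ℕ} {K : ℝ}
    (hdrift : ∀ i < n, ∀ᵐ ω ∂μ, |μ[f (i + 1) - f i | ℱ i] ω| ≤ K) :
    ∀ᵐ ω ∂μ, ∀ k ≤ n, |predictablePart f ℱ μ k ω| ≤ k * K := by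
  filter_upwards [(eventually_all_finite (Set.finite_Iio n)).2 hdrift] with ω hω k hk
  calc |predictablePart f ℱ μ k ω|
      = |∑ i ∈ range k, μ[f (i + 1) - f i | ℱ i] ω| := by
        rw [predictablePart, Finset.sum_apply]
    _ ≤ ∑ i ∈ range k, |μ[f (i + 1) - f i | ℱ i] ω| := abs_sum_le_sum_abs _ _
    _ ≤ ∑ _i ∈ range k, K := sum_le_sum fun i hi => hω i ((mem_range.1 hi).trans_le hk)
    _ = k * K := by rw [sum_const, card_range, nsmul_eq_mul]

lemma martingalePart_add_one_sub (i : ℕ) :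
    martingalePart f ℱ μ (i + 1) - martingalePart f ℱ μ i
      = f (i + 1) - f i - μ[f (i + 1) - f i | ℱ i] := by
  simp only [martingalePart, predictablePart_add_one]
  abel

lemma memLp_martingalePart {p : ℝ≥0∞} (hp : 1 ≤ p) (hf : ∀ k, MemLp (f k) p μ) (k : ℕ) :
    MemLp (martingalePart f ℱ μ k) p μ :=
  (hf k).sub (memLp_finsetSum' _ fun i _ => ((hf (i + 1)).sub (hf i)).condExp hp)

lemma integral_sq_martingalePart_add_one_sub_le [IsProbabilityMeasure μ] {i : ℕ} {K : ℝ}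
    (hvar : ∀ᵐ ω ∂μ, μ[(f (i + 1) - f i - μ[f (i + 1) - f i | ℱ i]) ^ 2 | ℱ i] ω ≤ K) :
    ∫ ω, (martingalePart f ℱ μ (i + 1) ω - martingalePart f ℱ μ i ω) ^ 2 ∂μ ≤ K := by
  calc ∫ ω, (martingalePart f ℱ μ (i + 1) ω - martingalePart f ℱ μ i ω) ^ 2 ∂μ
      = ∫ ω, μ[(f (i + 1) - f i - μ[f (i + 1) - f i | ℱ i]) ^ 2 | ℱ i] ω ∂μ := by
        rw [integral_condExp (ℱ.le i), ← martingalePart_add_one_sub]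
        rfl
    _ ≤ ∫ _, K ∂μ := integral_mono_ae integrable_condExp (integrable_const K) hvar
    _ = K := by simp

theorem integral_sup'_abs_le_of_condExp_increment_le [IsProbabilityMeasure μ]
    (hf : StronglyAdapted ℱ f) (hL2 : ∀ k, MemLp (f k) 2 μ) (hf0 : f 0 = 0) {n : ℕ} {K : ℝ}
    (hK : 0 ≤ K) (hdrift : ∀ i < n, ∀ᵐ ω ∂μ, |μ[f (i + 1) - f i | ℱ i] ω| ≤ K)
    (hvar : ∀ i < n, ∀ᵐ ω ∂μ,
      μ[(f (i + 1) - f i - μ[f (i + 1) - f i | ℱ i]) ^ 2 | ℱ i] ω ≤ K) :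
    ∫ ω, (range (n + 1)).sup' nonempty_range_add_one (fun k => |f k ω|) ∂μ
      ≤ n * K + 2 * √(n * K) := by
  set M := martingalePart f ℱ μ
  have hM : Martingale M ℱ μ :=
    martingale_martingalePart hf fun k => (hL2 k).integrable one_le_two
  have hML2 : ∀ k, MemLp (M k) 2 μ := memLp_martingalePart one_le_two hL2
  have hMsup_int : Integrable
      (fun ω => (range (n + 1)).sup' nonempty_range_add_one fun k => |M k ω|) μ :=
    integrable_finset_sup' _ _ fun k _ => (hM.integrable k).abs
  have hV : ∫ ω, M n ω ^ 2 ∂μ ≤ n * K := hM.integral_sq_le hML2 (by simp [M, hf0])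
    fun i hi => integral_sq_martingalePart_add_one_sub_le (hvar i hi)
  have hsup : ∀ᵐ ω ∂μ, (range (n + 1)).sup' nonempty_range_add_one (fun k => |f k ω|)
      ≤ n * K + (range (n + 1)).sup' nonempty_range_add_one fun k => |M k ω| := by
    filter_upwards [ae_abs_predictablePart_le hdrift] with ω hA
    refine sup'_le _ _ fun k hk => ?_
    have hkn : k ≤ n := mem_range_succ_iff.1 hk
    calc |f k ω| = |predictablePart f ℱ μ k ω + M k ω| := by
          simp only [M, martingalePart, Pi.sub_apply, add_sub_cancel]
      _ ≤ |predictablePart f ℱ μ k ω| + |M k ω| := abs_add_le _ _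
      _ ≤ n * K + (range (n + 1)).sup' nonempty_range_add_one fun k => |M k ω| :=
        add_le_add ((hA k hkn).trans (mul_le_mul_of_nonneg_right (Nat.cast_le.2 hkn) hK))
          (le_sup' (fun k => |M k ω|) hk)
  calc ∫ ω, (range (n + 1)).sup' nonempty_range_add_one (fun k => |f k ω|) ∂μ
      ≤ ∫ ω, n * K + (range (n + 1)).sup' nonempty_range_add_one (fun k => |M k ω|) ∂μ :=
        integral_mono_of_nonneg (ae_of_all _ fun ω =>
          le_sup'_of_le _ (mem_range.2 n.succ_pos) (abs_nonneg _))
          ((integrable_const _).add hMsup_int) hsup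
    _ = n * K + ∫ ω, (range (n + 1)).sup' nonempty_range_add_one (fun k => |M k ω|) ∂μ := by
        rw [integral_add (integrable_const _) hMsup_int, integral_const, probReal_univ, one_smul]
    _ ≤ n * K + 2 * √(n * K) := by
        gcongr
        exact (hM.integral_sup'_abs_le hML2 n).trans
          (mul_le_mul_of_nonneg_left (Real.sqrt_le_sqrt hV) zero_le_two)

end Decomposition

end MeasureTheory

/-- a discrete-time maximal estimate: if `X₀ = 0`, the process is
square-integrable and adapted to `(𝒢 i)`, the conditional drift of each increment is
bounded by `K` and the conditional variance of each increment is bounded by `K`, then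
`E[max_{0 ≤ k ≤ n} |X_k|] ≤ nK + 2√(nK)`. -/
theorem stmt_10 {Ωt : Type*} [m : MeasurableSpace Ωt] (P : Measure Ωt)
    [IsProbabilityMeasure P]
    (n : ℕ) (𝒢 : ℕ → MeasurableSpace Ωt)
    (hmono : ∀ i j, i ≤ j → 𝒢 i ≤ 𝒢 j) (hle : ∀ i, 𝒢 i ≤ m)
    (X : ℕ → Ωt → ℝ)
    (hL2 : ∀ i ≤ n, MemLp (X i) 2 P)
    (hadapted : ∀ i ≤ n, StronglyMeasurable[𝒢 i] (X i))
    (hX0 : ∀ ω, X 0 ω = 0)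
    (K : ℝ) (hK : 0 ≤ K)
    (hdrift : ∀ i < n, ∀ᵐ ω ∂P,
      |(P[fun ω' => X (i + 1) ω' - X i ω' | 𝒢 i]) ω| ≤ K)
    (hvar : ∀ i < n, ∀ᵐ ω ∂P,
      (P[fun ω' => (X (i + 1) ω' - X i ω'
          - (P[fun ω'' => X (i + 1) ω'' - X i ω'' | 𝒢 i]) ω') ^ 2 | 𝒢 i]) ω ≤ K) :
    (∫ ω, ((Finset.range (n + 1)).sup' Finset.nonempty_range_add_one fun k => |X k ω|) ∂P)
      ≤ n * K + 2 * Real.sqrt (n * K) := by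
  let ℱ : Filtration ℕ m := ⟨𝒢, fun i j => hmono i j, hle⟩
  -- freeze the process after time `n`, so that it is defined and adapted at all times
  set Y : ℕ → Ωt → ℝ := fun k => X (min k n)
  have hY_inc : ∀ i < n, Y (i + 1) - Y i = fun ω => X (i + 1) ω - X i ω := fun i hi => by
    simp only [Y, min_eq_left hi.le, min_eq_left (Nat.succ_le_of_lt hi)]; rfl
  have hY_sup : ∀ ω, ((range (n + 1)).sup' nonempty_range_add_one fun k => |X k ω|)
      = (range (n + 1)).sup' nonempty_range_add_one fun k => |Y k ω| := fun ω =>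
    sup'_congr _ rfl fun k hk => by simp only [Y, min_eq_left (mem_range_succ_iff.1 hk)]
  simp only [hY_sup]
  refine integral_sup'_abs_le_of_condExp_increment_le (ℱ := ℱ)
    (fun k => (hadapted _ (min_le_right k n)).mono (hmono _ _ (min_le_left k n)))
    (fun k => hL2 _ (min_le_right k n)) (funext fun ω => by simp [hX0]) hK
    (fun i hi => ?_) (fun i hi => ?_)
  · rw [hY_inc i hi]; exact hdrift i hi
  · rw [hY_inc i hi]; exact hvar i hi
end

section
/- In the finite-difference setting, there exist a constant C > 0 and a threshold n₀ ∈ ℕ, both depending only on L, λ, ε and T (and not on n), such that for all n ≥ n₀, all grid times t_k (0 ≤ k ≤ n) and all ω, ω' ∈ Ω: |u^h(t_k, ω) − u^h(t_k, ω')| ≤ C ‖ω_{t_k∧·} − ω'_{t_k∧·}‖. That is, the finite-difference numerical solutions are Lipschitz in the path variable, uniformly in the time step h. -/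
/-!
By the mean value theorem in `(y, z, γ)`, the difference of the explicit updates at `ω` and `ω'`
equals `α₀ δ₀ + α₊ δ₊ + α₋ δ₋ + h R`, where `δ₀, δ₊, δ₋` are the differences of `u^h(t_{k+1})` at
the stopped path and at the two bumped paths, `R` is the `ω`-increment of `G`, and
`α₀ = 1 + h ∂_yG - √h ∂_zG / λ - 2 ∂_γG / λ²`, `α₊ = √h ∂_zG / λ + ∂_γG / λ²`, `α₋ = ∂_γG / λ²`.
The CFL condition and a small step make the scheme monotone: these weights are nonnegative, with
sum `1 + h ∂_yG ≤ 1 + hL`. Stopping or bumping at `t_k` does not change the distance between paths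
stopped at `t_k`, so a Lipschitz constant `K` at `t_{k+1}` becomes `(1 + hL) K + hL` at `t_k`.
Starting from `K = L` at `t_n = T`, this gives `(L + 1) (1 + hL)^n ≤ (L + 1) e^{LT}`.
-/
noncomputable section

/-- The path space `Ω`: continuous real paths starting from `0`
(only their restriction to `[0,T]` is relevant). -/
abbrev Path1 := {ω : ℝ → ℝ // Continuous ω ∧ ω 0 = 0}

/-- The uniform norm over `[0,T]`: `‖f‖ = sup_{0 ≤ s ≤ T} |f s|`. -/
def supNorm (T : ℝ) (f : ℝ → ℝ) : ℝ := ⨆ s : Set.Icc (0 : ℝ) T, |f s.1|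

/-- The stopped path `ω_{t∧·} : s ↦ ω_{t ∧ s}`. -/
def stopPath (ω : Path1) (t : ℝ) (ht : 0 ≤ t) : Path1 :=
  ⟨fun s => ω.1 (min t s),
   ⟨ω.2.1.comp (continuous_const.min continuous_id),
    by
      have h1 : min t (0 : ℝ) = 0 := min_eq_right ht
      simp only [h1, ω.2.2]⟩⟩

/-- The path `ω ⊗_t^h x`: equal to `ω` on `[0,t]`, to `ω_t + x (s−t)/h` on `[t, t+h]`,
and to `ω_t + x` on `[t+h, ∞)`. -/
def bumpPath (ω : Path1) (t h x : ℝ) (ht : 0 ≤ t) (hh : 0 < h) : Path1 :=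
  ⟨fun s => ω.1 (min t s) + x * min (max ((s - t) / h) 0) 1,
   ⟨(ω.2.1.comp (continuous_const.min continuous_id)).add
      (continuous_const.mul
        ((((continuous_id.sub continuous_const).div_const h).max continuous_const).min
          continuous_const)),
    by
      have h0 : ((0 : ℝ) - t) / h ≤ 0 :=
        div_nonpos_iff.mpr (Or.inr ⟨by linarith, hh.le⟩)
      have h1 : max (((0 : ℝ) - t) / h) 0 = 0 := max_eq_right h0
      have h2 : min t (0 : ℝ) = 0 := min_eq_right ht
      simp only [h2, h1, ω.2.2, min_eq_left zero_le_one, mul_zero, add_zero]⟩⟩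

/-- The discrete derivative `𝒟⁰_h ψ(t,ω) = ψ(ω_{t∧·})`. -/
def D0 (ψ : Path1 → ℝ) (t : ℝ) (ht : 0 ≤ t) (ω : Path1) : ℝ := ψ (stopPath ω t ht)

/-- The discrete derivative `𝒟¹_h ψ(t,ω) = [ψ(ω ⊗_t^h Δx) − ψ(ω_{t∧·})]/Δx`. -/
def D1 (ψ : Path1 → ℝ) (t h dx : ℝ) (ht : 0 ≤ t) (hh : 0 < h) (ω : Path1) : ℝ :=
  (ψ (bumpPath ω t h dx ht hh) - ψ (stopPath ω t ht)) / dx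

/-- The discrete derivative
`𝒟²_h ψ(t,ω) = [ψ(ω ⊗_t^h Δx) − 2ψ(ω_{t∧·}) + ψ(ω ⊗_t^h (−Δx))]/Δx²`. -/
def D2 (ψ : Path1 → ℝ) (t h dx : ℝ) (ht : 0 ≤ t) (hh : 0 < h) (ω : Path1) : ℝ :=
  (ψ (bumpPath ω t h dx ht hh) - 2 * ψ (stopPath ω t ht) + ψ (bumpPath ω t h (-dx) ht hh)) / dx ^ 2

open Filter Topology

def StoppedLipschitzWith (T K t : ℝ) (ψ : Path1 → ℝ) : Prop :=
  ∀ ω ω' : Path1, |ψ ω - ψ ω'| ≤ K * supNorm T fun s => ω.1 (min t s) - ω'.1 (min t s)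

def fdStep (G : ℝ → Path1 → ℝ → ℝ → ℝ → ℝ) (ψ : Path1 → ℝ) (t h dx : ℝ) (ht : 0 ≤ t)
    (hh : 0 < h) (ω : Path1) : ℝ :=
  D0 ψ t ht ω + h * G t ω (D0 ψ t ht ω) (D1 ψ t h dx ht hh ω) (D2 ψ t h dx ht hh ω)

lemma supNorm_nonneg (T : ℝ) (f : ℝ → ℝ) : 0 ≤ supNorm T f :=
  Real.iSup_nonneg fun _ => abs_nonneg _

lemma supNorm_congr {T : ℝ} {f g : ℝ → ℝ} (h : ∀ s ∈ Set.Icc 0 T, f s = g s) :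
    supNorm T f = supNorm T g :=
  iSup_congr fun s => by rw [h s.1 s.2]

lemma stopPath_sub_stopPath_min {t t' : ℝ} (ht : 0 ≤ t) (htt' : t ≤ t') (ω ω' : Path1) (s : ℝ) :
    (stopPath ω t ht).1 (min t' s) - (stopPath ω' t ht).1 (min t' s) =
      ω.1 (min t s) - ω'.1 (min t s) := by
  simp only [stopPath, ← min_assoc, min_eq_left htt']

lemma bumpPath_sub_bumpPath_min {t t' h x : ℝ} (ht : 0 ≤ t) (hh : 0 < h) (htt' : t ≤ t')
    (ω ω' : Path1) (s : ℝ) :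
    (bumpPath ω t h x ht hh).1 (min t' s) - (bumpPath ω' t h x ht hh).1 (min t' s) =
      ω.1 (min t s) - ω'.1 (min t s) := by
  simp only [bumpPath, ← min_assoc, min_eq_left htt']
  ring

namespace StoppedLipschitzWith

variable {T K t t' : ℝ} {ψ : Path1 → ℝ}

lemma mono {K' : ℝ} (hψ : StoppedLipschitzWith T K t ψ) (hK : K ≤ K') :
    StoppedLipschitzWith T K' t ψ :=
  fun ω ω' => (hψ ω ω').trans (mul_le_mul_of_nonneg_right hK (supNorm_nonneg _ _))

lemma of_le_supNorm (hψ : ∀ ω ω' : Path1, |ψ ω - ψ ω'| ≤ K * supNorm T fun s => ω.1 s - ω'.1 s) :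
    StoppedLipschitzWith T K T ψ := by
  intro ω ω'
  rw [supNorm_congr fun s hs => by rw [min_eq_right hs.2]]
  exact hψ ω ω'

lemma comp_stopPath (hψ : StoppedLipschitzWith T K t' ψ) (ht : 0 ≤ t) (htt' : t ≤ t') :
    StoppedLipschitzWith T K t fun ω => ψ (stopPath ω t ht) := by
  intro ω ω'
  rw [← supNorm_congr fun s _ => stopPath_sub_stopPath_min ht htt' ω ω' s]
  exact hψ _ _

lemma comp_bumpPath {h x : ℝ} (hψ : StoppedLipschitzWith T K t' ψ) (ht : 0 ≤ t) (hh : 0 < h)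
    (htt' : t ≤ t') : StoppedLipschitzWith T K t fun ω => ψ (bumpPath ω t h x ht hh) := by
  intro ω ω'
  rw [← supNorm_congr fun s _ => bumpPath_sub_bumpPath_min ht hh htt' ω ω' s]
  exact hψ _ _

end StoppedLipschitzWith

lemma exists_sub_eq_mul_of_hasDerivAt {f f' : ℝ → ℝ} (hf : ∀ x, HasDerivAt f (f' x) x)
    (a b : ℝ) : ∃ c, f a - f b = f' c * (a - b) := by
  wlog hba : b < a generalizing a b
  · rcases (not_lt.mp hba).eq_or_lt with rfl | hab
    · exact ⟨a, by ring⟩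
    · obtain ⟨c, hc⟩ := this b a hab
      exact ⟨c, by linear_combination -hc⟩
  obtain ⟨c, -, hc⟩ := exists_hasDerivAt_eq_slope f f' hba
    (fun x _ => (hf x).continuousAt.continuousWithinAt) (fun x _ => hf x)
  exact ⟨c, by rw [hc, div_mul_cancel₀ _ (sub_ne_zero.mpr hba.ne')]⟩

lemma exists_sub_eq_of_hasDerivAt₃ {g gy gz gγ : ℝ → ℝ → ℝ → ℝ} {Sy Sz Sγ : Set ℝ}
    (hy : ∀ y z γ, HasDerivAt (fun r => g r z γ) (gy y z γ) y)
    (hz : ∀ y z γ, HasDerivAt (fun r => g y r γ) (gz y z γ) z)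
    (hγ : ∀ y z γ, HasDerivAt (fun r => g y z r) (gγ y z γ) γ)
    (hSy : ∀ y z γ, gy y z γ ∈ Sy) (hSz : ∀ y z γ, gz y z γ ∈ Sz)
    (hSγ : ∀ y z γ, gγ y z γ ∈ Sγ) (y z γ y' z' γ' : ℝ) :
    ∃ A ∈ Sy, ∃ B ∈ Sz, ∃ C ∈ Sγ,
      g y z γ - g y' z' γ' = A * (y - y') + B * (z - z') + C * (γ - γ') := by
  obtain ⟨a, ha⟩ := exists_sub_eq_mul_of_hasDerivAt (fun r => hy r z γ) y y'
  obtain ⟨b, hb⟩ := exists_sub_eq_mul_of_hasDerivAt (fun r => hz y' r γ) z z'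
  obtain ⟨c, hc⟩ := exists_sub_eq_mul_of_hasDerivAt (fun r => hγ y' z' r) γ γ'
  exact ⟨_, hSy a z γ, _, hSz y' b γ, _, hSγ y' z' c, by linear_combination ha + hb + hc⟩

lemma abs_mul_add_mul_add_mul_add_le {α β γ a b c e D : ℝ} (hα : 0 ≤ α) (hβ : 0 ≤ β)
    (hγ : 0 ≤ γ) (ha : |a| ≤ D) (hb : |b| ≤ D) (hc : |c| ≤ D) :
    |α * a + β * b + γ * c + e| ≤ (α + β + γ) * D + |e| := by
  have hαa : |α * a| ≤ α * D := by rw [abs_mul, abs_of_nonneg hα]; gcongr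
  have hβb : |β * b| ≤ β * D := by rw [abs_mul, abs_of_nonneg hβ]; gcongr
  have hγc : |γ * c| ≤ γ * D := by rw [abs_mul, abs_of_nonneg hγ]; gcongr
  calc |α * a + β * b + γ * c + e|
      ≤ |α * a| + |β * b| + |γ * c| + |e| := by
        linarith [abs_add_le (α * a + β * b + γ * c) e, abs_add_le (α * a + β * b) (γ * c),
          abs_add_le (α * a) (β * b)]
    _ ≤ (α + β + γ) * D + |e| := by linarith

lemma abs_fd_increment_le {L lam eps h A B C d₀ dp dm R D ρ : ℝ} (hlam : 0 < lam) (hh : 0 < h)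
    (hA : |A| ≤ L) (hB : |B| ≤ L) (hC : C ∈ Set.Icc eps ((1 / 2 - eps) * lam ^ 2))
    (hhL : h * L ≤ eps) (hsqrt₁ : √h * lam * L ≤ eps) (hsqrt₂ : √h * L ≤ eps * lam)
    (hD : 0 ≤ D) (hd₀ : |d₀| ≤ D) (hdp : |dp| ≤ D) (hdm : |dm| ≤ D) (hR : |R| ≤ ρ) :
    |d₀ + h * (A * d₀ + B * ((dp - d₀) / (lam * √h)) +
        C * ((dp - 2 * d₀ + dm) / (lam * √h) ^ 2) + R)| ≤ (1 + h * L) * D + h * ρ := by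
  set s := √h
  have hs : 0 < s := Real.sqrt_pos.mpr hh
  have hs2 : s ^ 2 = h := Real.sq_sqrt hh.le
  set p := s * B / lam with hp_def
  set q := C / lam ^ 2 with hq_def
  have hp_abs : |p| ≤ s * L / lam := by
    rw [abs_div, abs_mul, abs_of_pos hs, abs_of_pos hlam]
    gcongr
  have hp_eps : s * L / lam ≤ eps := by
    rw [div_le_iff₀ hlam]
    exact hsqrt₂
  have hq_lo : s * L / lam ≤ q := by
    rw [div_le_div_iff₀ hlam (by positivity)]
    nlinarith [hC.1]
  have hq_hi : q ≤ 1 / 2 - eps := by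
    rw [div_le_iff₀ (by positivity)]
    exact hC.2
  have hidentity : d₀ + h * (A * d₀ + B * ((dp - d₀) / (lam * s)) +
        C * ((dp - 2 * d₀ + dm) / (lam * s) ^ 2) + R) =
      (1 + h * A - p - 2 * q) * d₀ + (p + q) * dp + q * dm + h * R := by
    rw [hp_def, hq_def, ← hs2]
    field_simp
    ring
  rw [hidentity]
  refine (abs_mul_add_mul_add_mul_add_le ?_ ?_ ?_ hd₀ hdp hdm).trans ?_
  · nlinarith [abs_le.mp hA, abs_le.mp hp_abs]
  · linarith [abs_le.mp hp_abs]
  · exact (div_nonneg (mul_nonneg hs.le ((abs_nonneg A).trans hA)) hlam.le).trans hq_lo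
  · have hAD : h * A * D ≤ h * L * D := by gcongr; exact (abs_le.mp hA).2
    have hRρ : h * |R| ≤ h * ρ := by gcongr
    rw [abs_mul, abs_of_pos hh]
    linarith

theorem stoppedLipschitzWith_fdStep {T L lam eps h t t' K : ℝ}
    {G Gy Gz Gg : ℝ → Path1 → ℝ → ℝ → ℝ → ℝ} {ψ : Path1 → ℝ}
    (hlam : 0 < lam) (ht : 0 ≤ t) (hh : 0 < h) (htt' : t ≤ t') (hK : 0 ≤ K)
    (hGlip : ∀ t (ω ω' : Path1) y z γ,
      |G t ω y z γ - G t ω' y z γ| ≤ L * supNorm T fun s => ω.1 (min t s) - ω'.1 (min t s))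
    (hdy : ∀ t ω y z γ, HasDerivAt (fun r => G t ω r z γ) (Gy t ω y z γ) y)
    (hdz : ∀ t ω y z γ, HasDerivAt (fun r => G t ω y r γ) (Gz t ω y z γ) z)
    (hdg : ∀ t ω y z γ, HasDerivAt (fun r => G t ω y z r) (Gg t ω y z γ) γ)
    (hGyb : ∀ t ω y z γ, |Gy t ω y z γ| ≤ L)
    (hGzb : ∀ t ω y z γ, |Gz t ω y z γ| ≤ L)
    (hGgb : ∀ t ω y z γ, eps ≤ Gg t ω y z γ ∧ Gg t ω y z γ ≤ (1 / 2 - eps) * lam ^ 2)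
    (hhL : h * L ≤ eps) (hsqrt₁ : √h * lam * L ≤ eps) (hsqrt₂ : √h * L ≤ eps * lam)
    (hψ : StoppedLipschitzWith T K t' ψ) :
    StoppedLipschitzWith T ((1 + h * L) * K + h * L) t (fdStep G ψ t h (lam * √h) ht hh) := by
  intro ω ω'
  set dx := lam * √h
  obtain ⟨A, hA, B, hB, C, hC, hABC⟩ := exists_sub_eq_of_hasDerivAt₃
    (Sy := {A | |A| ≤ L}) (Sz := {B | |B| ≤ L}) (Sγ := Set.Icc eps ((1 / 2 - eps) * lam ^ 2))
    (hdy t ω) (hdz t ω) (hdg t ω) (hGyb t ω) (hGzb t ω) (hGgb t ω)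
    (D0 ψ t ht ω) (D1 ψ t h dx ht hh ω) (D2 ψ t h dx ht hh ω)
    (D0 ψ t ht ω') (D1 ψ t h dx ht hh ω') (D2 ψ t h dx ht hh ω')
  set R := G t ω (D0 ψ t ht ω') (D1 ψ t h dx ht hh ω') (D2 ψ t h dx ht hh ω') -
    G t ω' (D0 ψ t ht ω') (D1 ψ t h dx ht hh ω') (D2 ψ t h dx ht hh ω')
  have hincrement : fdStep G ψ t h dx ht hh ω - fdStep G ψ t h dx ht hh ω' =
      let d₀ := ψ (stopPath ω t ht) - ψ (stopPath ω' t ht)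
      let dp := ψ (bumpPath ω t h dx ht hh) - ψ (bumpPath ω' t h dx ht hh)
      let dm := ψ (bumpPath ω t h (-dx) ht hh) - ψ (bumpPath ω' t h (-dx) ht hh)
      d₀ + h * (A * d₀ + B * ((dp - d₀) / dx) + C * ((dp - 2 * d₀ + dm) / dx ^ 2) + R) := by
    simp only [fdStep, D0, D1, D2, R] at hABC ⊢
    linear_combination h * hABC
  rw [hincrement]
  refine (abs_fd_increment_le hlam hh hA hB hC hhL hsqrt₁ hsqrt₂
    (mul_nonneg hK (supNorm_nonneg _ _)) ((hψ.comp_stopPath ht htt') ω ω')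
    ((hψ.comp_bumpPath ht hh htt') ω ω') ((hψ.comp_bumpPath ht hh htt') ω ω')
    (hGlip t ω ω' _ _ _)).trans_eq ?_
  ring

theorem StoppedLipschitzWith.of_backward {T K₀ c : ℝ} {τ : ℕ → ℝ} {u : ℕ → Path1 → ℝ} {n : ℕ}
    (hc : 0 ≤ c) (hK₀ : 0 ≤ K₀) (hn : StoppedLipschitzWith T K₀ (τ n) (u n))
    (hstep : ∀ k < n, ∀ K, 0 ≤ K → StoppedLipschitzWith T K (τ (k + 1)) (u (k + 1)) →
      StoppedLipschitzWith T ((1 + c) * K + c) (τ k) (u k))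
    {k : ℕ} (hk : k ≤ n) :
    StoppedLipschitzWith T ((K₀ + 1) * (1 + c) ^ (n - k) - 1) (τ k) (u k) := by
  induction hk using Nat.decreasingInduction with
  | self => simpa using hn
  | of_succ k hk ih =>
    have hK : 0 ≤ (K₀ + 1) * (1 + c) ^ (n - (k + 1)) - 1 := by
      nlinarith [one_le_pow₀ (n := n - (k + 1)) (by linarith : 1 ≤ 1 + c)]
    convert hstep k hk _ hK ih using 1
    rw [show n - k = n - (k + 1) + 1 by omega, pow_succ]
    ring

lemma one_add_pow_le_exp_mul {x : ℝ} (hx : 0 ≤ x) {m n : ℕ} (hmn : m ≤ n) :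
    (1 + x) ^ m ≤ Real.exp (n * x) :=
  calc (1 + x) ^ m ≤ Real.exp x ^ m := by
        gcongr
        linarith [Real.add_one_le_exp x]
    _ = Real.exp (m * x) := (Real.exp_nat_mul x m).symm
    _ ≤ Real.exp (n * x) := by gcongr

lemma eventually_small_step (T : ℝ) {L lam eps : ℝ} (hlam : 0 < lam) (heps : 0 < eps) :
    ∀ᶠ n : ℕ in atTop, T / n * L ≤ eps ∧ √(T / n) * lam * L ≤ eps ∧ √(T / n) * L ≤ eps * lam := by
  have hh : Tendsto (fun n : ℕ => T / n) atTop (𝓝 0) := tendsto_const_div_atTop_nhds_zero_nat T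
  have hs : Tendsto (fun n : ℕ => √(T / n)) atTop (𝓝 0) := by
    have := (Real.continuous_sqrt.tendsto 0).comp hh
    rwa [Real.sqrt_zero] at this
  refine ((hh.mul_const L).eventually_le_const ?_).and
    ((((hs.mul_const lam).mul_const L).eventually_le_const ?_).and
      ((hs.mul_const L).eventually_le_const ?_)) <;> simp [heps, hlam]

theorem stmt_11_general (T L lam eps : ℝ) (hL : 0 ≤ L) (hlam : 0 < lam)
    (heps : eps ∈ Set.Ioo (0 : ℝ) (1 / 2))
    (G Gy Gz Gg : ℝ → Path1 → ℝ → ℝ → ℝ → ℝ)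
    -- `G` is `L`-Lipschitz in `ω` (for the stopped sup-norm) and `|G(t,ω,0,0,0)| ≤ L`:
    (hGlip : ∀ t (ω ω' : Path1) y z γ,
      |G t ω y z γ - G t ω' y z γ| ≤ L * supNorm T fun s => ω.1 (min t s) - ω'.1 (min t s))
    -- `G` is continuously differentiable in `(y,z,γ)` with partial derivatives `Gy, Gz, Gg`:
    (hdy : ∀ t ω y z γ, HasDerivAt (fun r => G t ω r z γ) (Gy t ω y z γ) y)
    (hdz : ∀ t ω y z γ, HasDerivAt (fun r => G t ω y r γ) (Gz t ω y z γ) z)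
    (hdg : ∀ t ω y z γ, HasDerivAt (fun r => G t ω y z r) (Gg t ω y z γ) γ)
    -- bounds on the partial derivatives, including the CFL condition:
    (hGyb : ∀ t ω y z γ, |Gy t ω y z γ| ≤ L)
    (hGzb : ∀ t ω y z γ, |Gz t ω y z γ| ≤ L)
    (hGgb : ∀ t ω y z γ, eps ≤ Gg t ω y z γ ∧ Gg t ω y z γ ≤ (1 / 2 - eps) * lam ^ 2)
    -- the terminal condition is bounded by `L` and `L`-Lipschitz:
    (ξ : Path1 → ℝ)
    (hξlip : ∀ ω ω' : Path1, |ξ ω - ξ ω'| ≤ L * supNorm T fun s => ω.1 s - ω'.1 s) :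
    ∃ C > (0 : ℝ), ∃ n₀ : ℕ, 1 ≤ n₀ ∧ ∀ n : ℕ, n₀ ≤ n →
      ∀ hstep_pos : 0 < T / (n : ℝ),
      ∀ u : ℕ → Path1 → ℝ,
      -- terminal condition of the backward recursion:
      (∀ ω, u n ω = ξ ω) →
      -- the backward finite-difference recursion with `h = T/n`, `t_k = k h`, `Δx = lam √h`:
      (∀ k, k < n → ∀ ω : Path1,
        u k ω =
          u (k + 1) (stopPath ω ((k : ℝ) * (T / n))
              (mul_nonneg (Nat.cast_nonneg k) hstep_pos.le))
          + (T / n) * G ((k : ℝ) * (T / n)) ω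
              (D0 (u (k + 1)) ((k : ℝ) * (T / n))
                (mul_nonneg (Nat.cast_nonneg k) hstep_pos.le) ω)
              (D1 (u (k + 1)) ((k : ℝ) * (T / n)) (T / n) (lam * Real.sqrt (T / n))
                (mul_nonneg (Nat.cast_nonneg k) hstep_pos.le) hstep_pos ω)
              (D2 (u (k + 1)) ((k : ℝ) * (T / n)) (T / n) (lam * Real.sqrt (T / n))
                (mul_nonneg (Nat.cast_nonneg k) hstep_pos.le) hstep_pos ω)) →
      -- conclusion: uniform Lipschitz continuity in `ω` at every grid time:
      ∀ k, k ≤ n → ∀ ω ω' : Path1,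
        |u k ω - u k ω'| ≤
          C * supNorm T fun s =>
            ω.1 (min ((k : ℝ) * (T / n)) s) - ω'.1 (min ((k : ℝ) * (T / n)) s) := by
  obtain ⟨N, hN⟩ := eventually_atTop.mp (eventually_small_step T hlam heps.1)
  refine ⟨(L + 1) * Real.exp (T * L), by positivity, max N 1, le_max_right _ _,
    fun n hn hstep u hterm hrec k hk => ?_⟩
  obtain ⟨hhL, hsqrt₁, hsqrt₂⟩ := hN n (le_of_max_le_left hn)
  have hn0 : (n : ℝ) ≠ 0 := Nat.cast_ne_zero.mpr (by omega)
  have hterminal : StoppedLipschitzWith T L (n * (T / n)) (u n) := by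
    rw [mul_div_cancel₀ T hn0, show u n = ξ from funext hterm]
    exact .of_le_supNorm hξlip
  have hlip := StoppedLipschitzWith.of_backward (τ := fun k => k * (T / n)) (c := T / n * L)
    (by positivity) hL hterminal (fun j hj K hK hK' => by
      rw [show u j = _ from funext (hrec j hj)]
      exact stoppedLipschitzWith_fdStep hlam _ hstep (by gcongr; simp) hK hGlip hdy hdz hdg
        hGyb hGzb hGgb hhL hsqrt₁ hsqrt₂ hK') hk
  refine hlip.mono ?_
  have hexp := one_add_pow_le_exp_mul (by positivity : 0 ≤ T / n * L) (Nat.sub_le n k)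
  rw [← mul_assoc, mul_div_cancel₀ T hn0] at hexp
  linarith [mul_le_mul_of_nonneg_left hexp (by linarith : 0 ≤ L + 1)]

/-- uniform Lipschitz continuity in the path variable of the explicit
finite-difference numerical solutions: there are `C > 0` and `n₀` (independent of `n`)
such that for all `n ≥ n₀`, all grid times `t_k = k T/n` and all paths `ω, ω'`,
`|u^h(t_k,ω) − u^h(t_k,ω')| ≤ C ‖ω_{t_k∧·} − ω'_{t_k∧·}‖`. -/
theorem stmt_11 (T L lam eps : ℝ) (hT : 0 < T) (hL : 0 ≤ L) (hlam : 0 < lam)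
    (heps : eps ∈ Set.Ioo (0 : ℝ) (1 / 2))
    (G Gy Gz Gg : ℝ → Path1 → ℝ → ℝ → ℝ → ℝ)
    -- `G` is `L`-Lipschitz in `ω` (for the stopped sup-norm) and `|G(t,ω,0,0,0)| ≤ L`:
    (hGlip : ∀ t (ω ω' : Path1) y z γ,
      |G t ω y z γ - G t ω' y z γ| ≤ L * supNorm T fun s => ω.1 (min t s) - ω'.1 (min t s))
    (hG0 : ∀ t ω, |G t ω 0 0 0| ≤ L)
    -- `G` is continuously differentiable in `(y,z,γ)` with partial derivatives `Gy, Gz, Gg`: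
    (hdy : ∀ t ω y z γ, HasDerivAt (fun r => G t ω r z γ) (Gy t ω y z γ) y)
    (hdz : ∀ t ω y z γ, HasDerivAt (fun r => G t ω y r γ) (Gz t ω y z γ) z)
    (hdg : ∀ t ω y z γ, HasDerivAt (fun r => G t ω y z r) (Gg t ω y z γ) γ)
    (hdcont : ∀ t ω, Continuous fun p : ℝ × ℝ × ℝ =>
      (Gy t ω p.1 p.2.1 p.2.2, Gz t ω p.1 p.2.1 p.2.2, Gg t ω p.1 p.2.1 p.2.2))
    -- bounds on the partial derivatives, including the CFL condition:
    (hGyb : ∀ t ω y z γ, |Gy t ω y z γ| ≤ L)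
    (hGzb : ∀ t ω y z γ, |Gz t ω y z γ| ≤ L)
    (hGgb : ∀ t ω y z γ, eps ≤ Gg t ω y z γ ∧ Gg t ω y z γ ≤ (1 / 2 - eps) * lam ^ 2)
    -- the terminal condition is bounded by `L` and `L`-Lipschitz:
    (ξ : Path1 → ℝ) (hξb : ∀ ω, |ξ ω| ≤ L)
    (hξlip : ∀ ω ω' : Path1, |ξ ω - ξ ω'| ≤ L * supNorm T fun s => ω.1 s - ω'.1 s) :
    ∃ C > (0 : ℝ), ∃ n₀ : ℕ, 1 ≤ n₀ ∧ ∀ n : ℕ, n₀ ≤ n →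
      ∀ hstep_pos : 0 < T / (n : ℝ),
      ∀ u : ℕ → Path1 → ℝ,
      -- terminal condition of the backward recursion:
      (∀ ω, u n ω = ξ ω) →
      -- the backward finite-difference recursion with `h = T/n`, `t_k = k h`, `Δx = lam √h`:
      (∀ k, k < n → ∀ ω : Path1,
        u k ω =
          u (k + 1) (stopPath ω ((k : ℝ) * (T / n))
              (mul_nonneg (Nat.cast_nonneg k) hstep_pos.le))
          + (T / n) * G ((k : ℝ) * (T / n)) ω
              (D0 (u (k + 1)) ((k : ℝ) * (T / n))
                (mul_nonneg (Nat.cast_nonneg k) hstep_pos.le) ω)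
              (D1 (u (k + 1)) ((k : ℝ) * (T / n)) (T / n) (lam * Real.sqrt (T / n))
                (mul_nonneg (Nat.cast_nonneg k) hstep_pos.le) hstep_pos ω)
              (D2 (u (k + 1)) ((k : ℝ) * (T / n)) (T / n) (lam * Real.sqrt (T / n))
                (mul_nonneg (Nat.cast_nonneg k) hstep_pos.le) hstep_pos ω)) →
      -- conclusion: uniform Lipschitz continuity in `ω` at every grid time:
      ∀ k, k ≤ n → ∀ ω ω' : Path1,
        |u k ω - u k ω'| ≤
          C * supNorm T fun s =>
            ω.1 (min ((k : ℝ) * (T / n)) s) - ω'.1 (min ((k : ℝ) * (T / n)) s) :=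
  stmt_11_general T L lam eps hL hlam heps G Gy Gz Gg hGlip hdy hdz hdg hGyb hGzb hGgb ξ hξlip
end
end

section
/- In the finite-difference setting, there exists a threshold n₀ ∈ ℕ depending only on L, λ, ε and T such that for all n ≥ n₀, all grid times t_k and all ω ∈ Ω: |u^h(t_k, ω)| ≤ e^{LT}(L + LT). That is, the finite-difference numerical solutions are bounded uniformly in the time step h. -/
noncomputable section

/-!
By the mean value theorem in each of `y, z, γ`, one explicit step writes `u^h(t_k, ω)` as
`α u⁰ + β u⁺ + δ u⁻ + h G(t_k, ω, 0, 0, 0)`, where `u⁰, u±` are the values of `u^h(t_{k+1}, ·)` at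
`ω_{t_k∧·}` and `ω ⊗_{t_k}^h (±Δx)`. The CFL condition and a small `h` make the weights
nonnegative, with `α + β + δ = 1 + h ∂_yG ≤ 1 + hL`, so `sup |u_k| ≤ (1 + hL) sup |u_{k+1}| + hL`,
and the discrete Gronwall inequality gives `(1 + hL)^n (L + nhL) ≤ e^{LT} (L + LT)`.
-/

open Filter Topology

lemma exists_hasDerivAt_sub_eq_mul {f f' : ℝ → ℝ} (hf : ∀ x, HasDerivAt f (f' x) x) (y : ℝ) :
    ∃ c, f y - f 0 = f' c * y := by
  have hcont : Continuous f := continuous_iff_continuousAt.2 fun x => (hf x).continuousAt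
  rcases lt_trichotomy y 0 with hy | rfl | hy
  · obtain ⟨c, -, hc⟩ := exists_hasDerivAt_eq_slope f f' hy hcont.continuousOn fun x _ => hf x
    exact ⟨c, by rw [hc]; field_simp [hy.ne]; ring⟩
  · exact ⟨0, by simp⟩
  · obtain ⟨c, -, hc⟩ := exists_hasDerivAt_eq_slope f f' hy hcont.continuousOn fun x _ => hf x
    exact ⟨c, by rw [hc]; field_simp [hy.ne']; ring⟩

lemma exists_eq_add_partials_mul {g gy gz gγ : ℝ → ℝ → ℝ → ℝ}
    (hdy : ∀ y z γ, HasDerivAt (fun r => g r z γ) (gy y z γ) y)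
    (hdz : ∀ y z γ, HasDerivAt (fun r => g y r γ) (gz y z γ) z)
    (hdg : ∀ y z γ, HasDerivAt (fun r => g y z r) (gγ y z γ) γ) (y z γ : ℝ) :
    ∃ a b c, g y z γ = g 0 0 0 + gy a z γ * y + gz 0 b γ * z + gγ 0 0 c * γ := by
  obtain ⟨a, ha⟩ := exists_hasDerivAt_sub_eq_mul (fun x => hdy x z γ) y
  obtain ⟨b, hb⟩ := exists_hasDerivAt_sub_eq_mul (fun x => hdz 0 x γ) z
  obtain ⟨c, hc⟩ := exists_hasDerivAt_sub_eq_mul (fun x => hdg 0 0 x) γ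
  exact ⟨a, b, c, by linear_combination ha + hb + hc⟩

lemma abs_weighted_sum_le {α β δ x y z B : ℝ} (hα : 0 ≤ α) (hβ : 0 ≤ β) (hδ : 0 ≤ δ)
    (hx : |x| ≤ B) (hy : |y| ≤ B) (hz : |z| ≤ B) :
    |α * x + β * y + δ * z| ≤ (α + β + δ) * B :=
  calc |α * x + β * y + δ * z| ≤ |α * x| + |β * y| + |δ * z| := abs_add_three _ _ _
    _ = α * |x| + β * |y| + δ * |z| := by
      rw [abs_mul, abs_mul, abs_mul, abs_of_nonneg hα, abs_of_nonneg hβ, abs_of_nonneg hδ]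
    _ ≤ (α + β + δ) * B := by nlinarith

lemma abs_linear_step_le {h lam eps L A Bz C G0 ψ0 ψp ψm B : ℝ} (hh : 0 < h) (hlam : 0 < lam)
    (hA : |A| ≤ L) (hBz : |Bz| ≤ L) (hC₁ : eps ≤ C) (hC₂ : C ≤ (1 / 2 - eps) * lam ^ 2)
    (hG0 : |G0| ≤ L) (hLh : L * h ≤ eps) (hLs : L * √h ≤ eps * lam) (hLs' : L * √h * lam ≤ eps)
    (hψ0 : |ψ0| ≤ B) (hψp : |ψp| ≤ B) (hψm : |ψm| ≤ B) :
    |ψ0 + h * (G0 + A * ψ0 + Bz * ((ψp - ψ0) / (lam * √h))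
        + C * ((ψp - 2 * ψ0 + ψm) / (lam * √h) ^ 2))| ≤ (1 + h * L) * B + h * L := by
  set s := √h
  have hs : 0 < s := Real.sqrt_pos.2 hh
  have hsh : s ^ 2 = h := Real.sq_sqrt hh.le
  obtain ⟨hA₁, hA₂⟩ := abs_le.1 hA
  obtain ⟨hBz₁, hBz₂⟩ := abs_le.1 hBz
  set α := 1 + h * A - s * Bz / lam - 2 * C / lam ^ 2
  set β := s * Bz / lam + C / lam ^ 2
  set δ := C / lam ^ 2
  have hsplit : ψ0 + h * (G0 + A * ψ0 + Bz * ((ψp - ψ0) / (lam * s))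
      + C * ((ψp - 2 * ψ0 + ψm) / (lam * s) ^ 2)) = α * ψ0 + β * ψp + δ * ψm + h * G0 := by
    simp only [α, β, δ]; rw [← hsh]; field_simp; ring
  have heps : 0 ≤ eps := (mul_nonneg ((abs_nonneg A).trans hA) hh.le).trans hLh
  have hδ : 0 ≤ δ := div_nonneg (heps.trans hC₁) (sq_nonneg lam)
  have hβ : 0 ≤ β := by
    have hdrift : -(s * Bz * lam) ≤ eps := by
      nlinarith [mul_le_mul_of_nonneg_left hBz₁ (mul_nonneg hs.le hlam.le)]
    have hβ_eq : β = (s * Bz * lam + C) / lam ^ 2 := by simp only [β]; field_simp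
    rw [hβ_eq]
    exact div_nonneg (by linarith) (sq_nonneg lam)
  have hα : 0 ≤ α := by
    have e1 : s * Bz / lam ≤ eps := by
      rw [div_le_iff₀ hlam]; nlinarith [mul_le_mul_of_nonneg_left hBz₂ hs.le]
    have e2 : 2 * C / lam ^ 2 ≤ 1 - 2 * eps := by rw [div_le_iff₀ (by positivity)]; linarith
    have e3 : -eps ≤ h * A := by nlinarith
    linarith
  have hB : 0 ≤ B := (abs_nonneg _).trans hψ0
  rw [hsplit]
  calc |α * ψ0 + β * ψp + δ * ψm + h * G0| ≤ |α * ψ0 + β * ψp + δ * ψm| + |h * G0| :=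
        abs_add_le _ _
    _ ≤ (α + β + δ) * B + h * L := by
        gcongr
        · exact abs_weighted_sum_le hα hβ hδ hψ0 hψp hψm
        · rw [abs_mul, abs_of_pos hh]; gcongr
    _ ≤ (1 + h * L) * B + h * L := by
        have : α + β + δ = 1 + h * A := by ring
        rw [this]; gcongr

lemma abs_explicit_step_le {g gy gz gγ : ℝ → ℝ → ℝ → ℝ} {h lam eps L ψ0 ψp ψm B : ℝ}
    (hdy : ∀ y z γ, HasDerivAt (fun r => g r z γ) (gy y z γ) y)
    (hdz : ∀ y z γ, HasDerivAt (fun r => g y r γ) (gz y z γ) z)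
    (hdg : ∀ y z γ, HasDerivAt (fun r => g y z r) (gγ y z γ) γ)
    (hg0 : |g 0 0 0| ≤ L) (hgy : ∀ y z γ, |gy y z γ| ≤ L) (hgz : ∀ y z γ, |gz y z γ| ≤ L)
    (hgγ : ∀ y z γ, eps ≤ gγ y z γ ∧ gγ y z γ ≤ (1 / 2 - eps) * lam ^ 2)
    (hh : 0 < h) (hlam : 0 < lam)
    (hLh : L * h ≤ eps) (hLs : L * √h ≤ eps * lam) (hLs' : L * √h * lam ≤ eps)
    (hψ0 : |ψ0| ≤ B) (hψp : |ψp| ≤ B) (hψm : |ψm| ≤ B) :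
    |ψ0 + h * g ψ0 ((ψp - ψ0) / (lam * √h)) ((ψp - 2 * ψ0 + ψm) / (lam * √h) ^ 2)|
      ≤ (1 + h * L) * B + h * L := by
  obtain ⟨a, b, c, hlin⟩ := exists_eq_add_partials_mul hdy hdz hdg ψ0
    ((ψp - ψ0) / (lam * √h)) ((ψp - 2 * ψ0 + ψm) / (lam * √h) ^ 2)
  rw [hlin]
  exact abs_linear_step_le hh hlam (hgy _ _ _) (hgz _ _ _) (hgγ _ _ _).1 (hgγ _ _ _).2 hg0
    hLh hLs hLs' hψ0 hψp hψm

lemma abs_le_of_backward_step {X : Type*} {u : ℕ → X → ℝ} {n : ℕ} {K c : ℝ} (hc : 0 ≤ c)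
    (hterm : ∀ x, |u n x| ≤ K)
    (hstep : ∀ k < n, ∀ B, (∀ x, |u (k + 1) x| ≤ B) → ∀ x, |u k x| ≤ (1 + c) * B + c) :
    ∀ k ≤ n, ∀ x, |u k x| ≤ (1 + c) ^ (n - k) * (K + (n - k : ℕ) * c) := by
  intro k hk
  induction hk using Nat.decreasingInduction with
  | self => simpa using hterm
  | of_succ k hkn ih =>
    intro x
    have hnk : n - k = n - (k + 1) + 1 := by omega
    have hpow : c ≤ (1 + c) ^ (n - (k + 1) + 1) * c :=
      le_mul_of_one_le_left hc (one_le_pow₀ (by linarith))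
    rw [pow_succ] at hpow
    calc |u k x| ≤ (1 + c) * ((1 + c) ^ (n - (k + 1)) * (K + (n - (k + 1) : ℕ) * c)) + c :=
          hstep k hkn _ ih x
      _ ≤ (1 + c) ^ (n - k) * (K + (n - k : ℕ) * c) := by
          rw [hnk, pow_succ]; push_cast; nlinarith

lemma one_add_pow_mul_le_exp_mul {c K : ℝ} {m n : ℕ} (hc : 0 ≤ c) (hK : 0 ≤ K) (hmn : m ≤ n) :
    (1 + c) ^ m * (K + m * c) ≤ Real.exp (n * c) * (K + n * c) := by
  have hmn' : (m : ℝ) ≤ n := by exact_mod_cast hmn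
  calc (1 + c) ^ m * (K + m * c) ≤ (1 + c) ^ n * (K + n * c) := by
        gcongr
        linarith
    _ ≤ Real.exp c ^ n * (K + n * c) := by
        gcongr
        rw [add_comm]; exact Real.add_one_le_exp c
    _ = Real.exp (n * c) * (K + n * c) := by rw [← Real.exp_nat_mul]

lemma exists_forall_ge_small_step {T L eps lam : ℝ} (heps : 0 < eps) (hlam : 0 < lam) :
    ∃ n₀ : ℕ, 1 ≤ n₀ ∧ ∀ n ≥ n₀,
      L * (T / n) ≤ eps ∧ L * √(T / n) ≤ eps * lam ∧ L * √(T / n) * lam ≤ eps := by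
  have hh : Tendsto (fun n : ℕ => T / n) atTop (𝓝 0) := tendsto_const_div_atTop_nhds_zero_nat T
  have hs : Tendsto (fun n : ℕ => √(T / n)) atTop (𝓝 0) := by
    simpa only [Function.comp_def, Real.sqrt_zero] using (Real.continuous_sqrt.tendsto 0).comp hh
  have h₁ : Tendsto (fun n : ℕ => L * (T / n)) atTop (𝓝 0) := by simpa using hh.const_mul L
  have h₂ : Tendsto (fun n : ℕ => L * √(T / n)) atTop (𝓝 0) := by simpa using hs.const_mul L
  have h₃ : Tendsto (fun n : ℕ => L * √(T / n) * lam) atTop (𝓝 0) := by simpa using h₂.mul_const lam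
  obtain ⟨N, hN⟩ := eventually_atTop.1 ((h₁.eventually_le_const heps).and
    ((h₂.eventually_le_const (mul_pos heps hlam)).and (h₃.eventually_le_const heps)))
  exact ⟨max N 1, le_max_right _ _, fun n hn => hN n (le_of_max_le_left hn)⟩

theorem stmt_12_general (T L lam eps : ℝ) (hL : 0 ≤ L) (hlam : 0 < lam)
    (heps : eps ∈ Set.Ioo (0 : ℝ) (1 / 2))
    (G Gy Gz Gg : ℝ → Path1 → ℝ → ℝ → ℝ → ℝ)
    -- `G` is `L`-Lipschitz in `ω` (for the stopped sup-norm) and `|G(t,ω,0,0,0)| ≤ L`: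
    (hG0 : ∀ t ω, |G t ω 0 0 0| ≤ L)
    -- `G` is continuously differentiable in `(y,z,γ)` with partial derivatives `Gy, Gz, Gg`:
    (hdy : ∀ t ω y z γ, HasDerivAt (fun r => G t ω r z γ) (Gy t ω y z γ) y)
    (hdz : ∀ t ω y z γ, HasDerivAt (fun r => G t ω y r γ) (Gz t ω y z γ) z)
    (hdg : ∀ t ω y z γ, HasDerivAt (fun r => G t ω y z r) (Gg t ω y z γ) γ)
    -- bounds on the partial derivatives, including the CFL condition:
    (hGyb : ∀ t ω y z γ, |Gy t ω y z γ| ≤ L)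
    (hGzb : ∀ t ω y z γ, |Gz t ω y z γ| ≤ L)
    (hGgb : ∀ t ω y z γ, eps ≤ Gg t ω y z γ ∧ Gg t ω y z γ ≤ (1 / 2 - eps) * lam ^ 2)
    -- the terminal condition is bounded by `L` and `L`-Lipschitz:
    (ξ : Path1 → ℝ) (hξb : ∀ ω, |ξ ω| ≤ L) :
    ∃ n₀ : ℕ, 1 ≤ n₀ ∧ ∀ n : ℕ, n₀ ≤ n →
      ∀ hstep_pos : 0 < T / (n : ℝ),
      ∀ u : ℕ → Path1 → ℝ,
      -- terminal condition of the backward recursion: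
      (∀ ω, u n ω = ξ ω) →
      -- the backward finite-difference recursion with `h = T/n`, `t_k = k h`, `Δx = lam √h`:
      (∀ k, k < n → ∀ ω : Path1,
        u k ω =
          u (k + 1) (stopPath ω ((k : ℝ) * (T / n))
              (mul_nonneg (Nat.cast_nonneg k) hstep_pos.le))
          + (T / n) * G ((k : ℝ) * (T / n)) ω
              (D0 (u (k + 1)) ((k : ℝ) * (T / n))
                (mul_nonneg (Nat.cast_nonneg k) hstep_pos.le) ω)
              (D1 (u (k + 1)) ((k : ℝ) * (T / n)) (T / n) (lam * Real.sqrt (T / n))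
                (mul_nonneg (Nat.cast_nonneg k) hstep_pos.le) hstep_pos ω)
              (D2 (u (k + 1)) ((k : ℝ) * (T / n)) (T / n) (lam * Real.sqrt (T / n))
                (mul_nonneg (Nat.cast_nonneg k) hstep_pos.le) hstep_pos ω)) →
      -- conclusion: uniform boundedness at every grid time:
      ∀ k, k ≤ n → ∀ ω : Path1,
        |u k ω| ≤ Real.exp (L * T) * (L + L * T) := by
  obtain ⟨n₀, hn₀, hsmall⟩ := exists_forall_ge_small_step (T := T) (L := L) heps.1 hlam
  refine ⟨n₀, hn₀, fun n hn hstep_pos u hterm hrec k hk ω => ?_⟩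
  obtain ⟨hLh, hLs, hLs'⟩ := hsmall n hn
  have hn0 : (n : ℝ) ≠ 0 := by have := hn₀.trans hn; positivity
  have hbound := abs_le_of_backward_step (u := u) (mul_nonneg hstep_pos.le hL)
    (fun ω => by rw [hterm]; exact hξb ω)
    (fun k hk B hB ω => by
      rw [hrec k hk ω]
      exact abs_explicit_step_le (hdy _ ω) (hdz _ ω) (hdg _ ω) (hG0 _ ω) (hGyb _ ω) (hGzb _ ω)
        (hGgb _ ω) hstep_pos hlam hLh hLs hLs' (hB _) (hB _) (hB _))
    k hk ω
  calc |u k ω| ≤ _ := hbound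
    _ ≤ Real.exp (n * (T / n * L)) * (L + n * (T / n * L)) :=
      one_add_pow_mul_le_exp_mul (mul_nonneg hstep_pos.le hL) hL (Nat.sub_le n k)
    _ = Real.exp (L * T) * (L + L * T) := by field_simp

/-- uniform boundedness of the explicit finite-difference numerical
solutions: there is `n₀` (depending only on the data) such that for all `n ≥ n₀`,
all grid times `t_k` and all paths `ω`, `|u^h(t_k,ω)| ≤ e^{LT}(L + LT)`. -/
theorem stmt_12 (T L lam eps : ℝ) (hT : 0 < T) (hL : 0 ≤ L) (hlam : 0 < lam)
    (heps : eps ∈ Set.Ioo (0 : ℝ) (1 / 2))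
    (G Gy Gz Gg : ℝ → Path1 → ℝ → ℝ → ℝ → ℝ)
    -- `G` is `L`-Lipschitz in `ω` (for the stopped sup-norm) and `|G(t,ω,0,0,0)| ≤ L`:
    (hGlip : ∀ t (ω ω' : Path1) y z γ,
      |G t ω y z γ - G t ω' y z γ| ≤ L * supNorm T fun s => ω.1 (min t s) - ω'.1 (min t s))
    (hG0 : ∀ t ω, |G t ω 0 0 0| ≤ L)
    -- `G` is continuously differentiable in `(y,z,γ)` with partial derivatives `Gy, Gz, Gg`:
    (hdy : ∀ t ω y z γ, HasDerivAt (fun r => G t ω r z γ) (Gy t ω y z γ) y)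
    (hdz : ∀ t ω y z γ, HasDerivAt (fun r => G t ω y r γ) (Gz t ω y z γ) z)
    (hdg : ∀ t ω y z γ, HasDerivAt (fun r => G t ω y z r) (Gg t ω y z γ) γ)
    (hdcont : ∀ t ω, Continuous fun p : ℝ × ℝ × ℝ =>
      (Gy t ω p.1 p.2.1 p.2.2, Gz t ω p.1 p.2.1 p.2.2, Gg t ω p.1 p.2.1 p.2.2))
    -- bounds on the partial derivatives, including the CFL condition:
    (hGyb : ∀ t ω y z γ, |Gy t ω y z γ| ≤ L)
    (hGzb : ∀ t ω y z γ, |Gz t ω y z γ| ≤ L)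
    (hGgb : ∀ t ω y z γ, eps ≤ Gg t ω y z γ ∧ Gg t ω y z γ ≤ (1 / 2 - eps) * lam ^ 2)
    -- the terminal condition is bounded by `L` and `L`-Lipschitz:
    (ξ : Path1 → ℝ) (hξb : ∀ ω, |ξ ω| ≤ L)
    (hξlip : ∀ ω ω' : Path1, |ξ ω - ξ ω'| ≤ L * supNorm T fun s => ω.1 s - ω'.1 s) :
    ∃ n₀ : ℕ, 1 ≤ n₀ ∧ ∀ n : ℕ, n₀ ≤ n →
      ∀ hstep_pos : 0 < T / (n : ℝ),
      ∀ u : ℕ → Path1 → ℝ,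
      -- terminal condition of the backward recursion:
      (∀ ω, u n ω = ξ ω) →
      -- the backward finite-difference recursion with `h = T/n`, `t_k = k h`, `Δx = lam √h`:
      (∀ k, k < n → ∀ ω : Path1,
        u k ω =
          u (k + 1) (stopPath ω ((k : ℝ) * (T / n))
              (mul_nonneg (Nat.cast_nonneg k) hstep_pos.le))
          + (T / n) * G ((k : ℝ) * (T / n)) ω
              (D0 (u (k + 1)) ((k : ℝ) * (T / n))
                (mul_nonneg (Nat.cast_nonneg k) hstep_pos.le) ω)
              (D1 (u (k + 1)) ((k : ℝ) * (T / n)) (T / n) (lam * Real.sqrt (T / n))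
                (mul_nonneg (Nat.cast_nonneg k) hstep_pos.le) hstep_pos ω)
              (D2 (u (k + 1)) ((k : ℝ) * (T / n)) (T / n) (lam * Real.sqrt (T / n))
                (mul_nonneg (Nat.cast_nonneg k) hstep_pos.le) hstep_pos ω)) →
      -- conclusion: uniform boundedness at every grid time:
      ∀ k, k ≤ n → ∀ ω : Path1,
        |u k ω| ≤ Real.exp (L * T) * (L + L * T) :=
  stmt_12_general T L lam eps hL hlam heps G Gy Gz Gg hG0 hdy hdz hdg hGyb hGzb hGgb ξ hξb
end
end
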